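/- The Airy profile q(x,y) = J₁²(α√(x²+y²)) / (π(x²+y²)) with α = 2π n_a/λ > 0 is a probability density on ℝ², i.e., it is nonnegative and integrates to 1. -/

import Mathlib

open MeasureTheory intervalIntegral

/-- The Bessel function of the first kind of order one, via its integral
representation `J₁(x) = (1/π) ∫_0^π cos(θ - x sin θ) dθ`. -/
noncomputable def besselJ1 (x : ℝ) : ℝ :=
  (1 / Real.pi) * ∫ θ in (0:ℝ)..Real.pi, Real.cos (θ - x * Real.sin θ)

/-- The Airy profile with parameter `α = 2π n_a / λ`, extended continuously at the
origin (where its limit is `α²/(4π)`). -/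
noncomputable def airyProfile (α : ℝ) (p : ℝ × ℝ) : ℝ :=
  if p = 0 then α ^ 2 / (4 * Real.pi)
  else (besselJ1 (α * Real.sqrt (p.1 ^ 2 + p.2 ^ 2))) ^ 2 / (Real.pi * (p.1 ^ 2 + p.2 ^ 2))

/-!
Write `J₀(x) = (1/π) ∫₀^π cos (x sin θ) dθ`. Differentiating under the integral sign gives
`J₀' = -J₁` and `x J₁' = x J₀ - J₁`, hence `(J₀² + J₁²)' = -2 J₁² / x`. The substitution
`t = sin θ` turns `J₀` and `J₁` into Fourier integrals of integrable functions on `(0, 1)`, so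
both vanish at infinity by the Riemann–Lebesgue lemma, and
`∫₀^∞ J₁(x)² / x dx = (J₀(0)² + J₁(0)²) / 2 = 1/2`. In polar coordinates the mass of the
profile is `2π · (1/π) ∫₀^∞ J₁(αr)² / r dr`, and `dr / r` is scale invariant.
-/

open Real Set Filter Topology

noncomputable def besselJ0 (x : ℝ) : ℝ :=
  (1 / π) * ∫ θ in (0:ℝ)..π, cos (x * sin θ)

theorem hasDerivAt_integral_cos_sub_mul_sin {φ : ℝ → ℝ} (hφ : Continuous φ) (a b x : ℝ) :
    HasDerivAt (fun x => ∫ θ in a..b, cos (φ θ - x * sin θ))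
      (∫ θ in a..b, sin θ * sin (φ θ - x * sin θ)) x := by
  have hderiv (θ y : ℝ) : HasDerivAt (fun y => cos (φ θ - y * sin θ))
      (sin θ * sin (φ θ - y * sin θ)) y := by
    convert ((hasDerivAt_mul_const (sin θ)).const_sub (φ θ)).cos using 1
    ring
  refine (hasDerivAt_integral_of_dominated_loc_of_deriv_le (bound := fun _ => 1)
    (Metric.ball_mem_nhds x one_pos) (.of_forall fun y => by fun_prop)
    (Continuous.intervalIntegrable (by fun_prop) _ _) (by fun_prop)
    (.of_forall fun θ _ y _ => ?_) intervalIntegrable_const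
    (.of_forall fun θ _ y _ => hderiv θ y)).2
  simpa [abs_mul] using mul_le_one₀ (abs_sin_le_one θ) (abs_nonneg _) (abs_sin_le_one _)

theorem integral_cos_mul_cos_mul_sin (x : ℝ) :
    ∫ θ in (0:ℝ)..π, cos θ * cos (x * sin θ) = 0 := by
  have h := integral_comp_sub_left (fun θ => cos θ * cos (x * sin θ)) π (a := 0) (b := π)
  simp only [cos_pi_sub, sin_pi_sub, sub_self, sub_zero, neg_mul,
    intervalIntegral.integral_neg] at h
  linarith

theorem besselJ1_eq_integral_sin_mul_sin (x : ℝ) :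
    besselJ1 x = (1 / π) * ∫ θ in (0:ℝ)..π, sin θ * sin (x * sin θ) := by
  simp only [besselJ1, cos_sub]
  rw [intervalIntegral.integral_add (Continuous.intervalIntegrable (by fun_prop) _ _)
    (Continuous.intervalIntegrable (by fun_prop) _ _), integral_cos_mul_cos_mul_sin, zero_add]

theorem hasDerivAt_besselJ0 (x : ℝ) : HasDerivAt besselJ0 (-besselJ1 x) x := by
  have h := (hasDerivAt_integral_cos_sub_mul_sin (φ := fun _ => 0) continuous_const 0 π
    x).const_mul (1 / π)
  simp only [zero_sub, cos_neg, sin_neg, mul_neg, intervalIntegral.integral_neg] at h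
  rwa [besselJ1_eq_integral_sin_mul_sin]

theorem integral_one_sub_mul_cos_mul_cos_sub_mul_sin (x : ℝ) :
    ∫ θ in (0:ℝ)..π, (1 - x * cos θ) * cos (θ - x * sin θ) = 0 := by
  have hderiv (θ : ℝ) : HasDerivAt (fun θ => sin (θ - x * sin θ))
      ((1 - x * cos θ) * cos (θ - x * sin θ)) θ := by
    convert ((hasDerivAt_id' θ).fun_sub ((hasDerivAt_sin θ).const_mul x)).sin using 1
    ring
  rw [integral_eq_sub_of_hasDerivAt (fun θ _ => hderiv θ)
    (Continuous.intervalIntegrable (by fun_prop) _ _)]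
  simp

theorem hasDerivAt_besselJ1 {x : ℝ} (hx : x ≠ 0) :
    HasDerivAt besselJ1 (besselJ0 x - besselJ1 x / x) x := by
  have h := (hasDerivAt_integral_cos_sub_mul_sin (φ := fun θ => θ) continuous_id 0 π
    x).const_mul (1 / π)
  refine h.congr_deriv ?_
  have hpt (θ : ℝ) : x * (sin θ * sin (θ - x * sin θ)) =
      x * cos (x * sin θ) - cos (θ - x * sin θ) + (1 - x * cos θ) * cos (θ - x * sin θ) := by
    -- the last term is the `θ`-derivative of `sin (θ - x sin θ)`
    have : x * sin θ = θ - (θ - x * sin θ) := by ring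
    rw [this, cos_sub, ← this]
    ring
  have key : x * ∫ θ in (0:ℝ)..π, sin θ * sin (θ - x * sin θ) =
      x * (∫ θ in (0:ℝ)..π, cos (x * sin θ)) - ∫ θ in (0:ℝ)..π, cos (θ - x * sin θ) :=
      by
    rw [← intervalIntegral.integral_const_mul, integral_congr (fun θ _ => hpt θ),
      intervalIntegral.integral_add (Continuous.intervalIntegrable (by fun_prop) _ _)
        (Continuous.intervalIntegrable (by fun_prop) _ _),
      integral_one_sub_mul_cos_mul_cos_sub_mul_sin, add_zero,
      intervalIntegral.integral_sub (Continuous.intervalIntegrable (by fun_prop) _ _)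
        (Continuous.intervalIntegrable (by fun_prop) _ _), intervalIntegral.integral_const_mul]
  unfold besselJ0 besselJ1
  generalize (∫ θ in (0:ℝ)..π, sin θ * sin (θ - x * sin θ)) = I at key ⊢
  generalize (∫ θ in (0:ℝ)..π, cos (x * sin θ)) = P at key ⊢
  generalize (∫ θ in (0:ℝ)..π, cos (θ - x * sin θ)) = Q at key ⊢
  field_simp
  linear_combination key

theorem continuous_besselJ0 : Continuous besselJ0 :=
  continuous_iff_continuousAt.2 fun x => (hasDerivAt_besselJ0 x).continuousAt

theorem continuous_besselJ1 : Continuous besselJ1 := by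
  unfold besselJ1; fun_prop

theorem besselJ0_zero : besselJ0 0 = 1 := by
  simp [besselJ0, pi_ne_zero]

theorem besselJ1_zero : besselJ1 0 = 0 := by
  simp [besselJ1]

theorem tendsto_integral_cexp_mul_I_mul_cocompact (f : ℝ → ℂ) :
    Tendsto (fun x : ℝ => ∫ t, Complex.exp (↑(x * t) * Complex.I) * f t) (cocompact ℝ)
      (𝓝 0) := by
  have hc : -(2 * π)⁻¹ ≠ 0 := by simp [pi_ne_zero]
  refine ((Real.tendsto_integral_exp_smul_cocompact f).comp
    (tendsto_cocompact_mul_left₀ hc)).congr fun x => ?_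
  refine integral_congr_ae (.of_forall fun t => ?_)
  simp only [Circle.smul_def, fourierChar_apply, smul_eq_mul]
  congr 3
  field_simp

theorem integrable_cexp_mul_I_mul {f : ℝ → ℂ} (hf : Integrable f) (x : ℝ) :
    Integrable fun t => Complex.exp (↑(x * t) * Complex.I) * f t :=
  hf.bdd_mul (c := 1) (by fun_prop) (.of_forall fun t => by rw [Complex.norm_exp_ofReal_mul_I])

theorem tendsto_setIntegral_cos_mul_cocompact {s : Set ℝ} (hs : MeasurableSet s) {f : ℝ → ℝ}
    (hf : IntegrableOn f s) :
    Tendsto (fun x => ∫ t in s, cos (x * t) * f t) (cocompact ℝ) (𝓝 0) := by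
  have h := (Complex.continuous_re.tendsto 0).comp
    (tendsto_integral_cexp_mul_I_mul_cocompact (s.indicator fun t => (f t : ℂ)))
  rw [Complex.zero_re] at h
  have hF : Integrable (s.indicator fun t => (f t : ℂ)) :=
    IntegrableOn.integrable_indicator hf.ofReal hs
  refine h.congr fun x => ?_
  rw [Function.comp_apply, ← RCLike.re_eq_complex_re,
    ← integral_re (integrable_cexp_mul_I_mul hF x),
    ← MeasureTheory.integral_indicator hs]
  congr 1 with t
  by_cases ht : t ∈ s
  · simp only [indicator_of_mem ht, RCLike.re_to_complex, Complex.re_mul_ofReal,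
      Complex.exp_ofReal_mul_I_re]
  · simp [ht]

theorem tendsto_setIntegral_sin_mul_cocompact {s : Set ℝ} (hs : MeasurableSet s) {f : ℝ → ℝ}
    (hf : IntegrableOn f s) :
    Tendsto (fun x => ∫ t in s, sin (x * t) * f t) (cocompact ℝ) (𝓝 0) := by
  have h := (Complex.continuous_im.tendsto 0).comp
    (tendsto_integral_cexp_mul_I_mul_cocompact (s.indicator fun t => (f t : ℂ)))
  rw [Complex.zero_im] at h
  have hF : Integrable (s.indicator fun t => (f t : ℂ)) :=
    IntegrableOn.integrable_indicator hf.ofReal hs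
  refine h.congr fun x => ?_
  rw [Function.comp_apply, ← RCLike.im_eq_complex_im,
    ← integral_im (integrable_cexp_mul_I_mul hF x),
    ← MeasureTheory.integral_indicator hs]
  congr 1 with t
  by_cases ht : t ∈ s
  · simp only [indicator_of_mem ht, RCLike.im_to_complex, Complex.im_mul_ofReal,
      Complex.exp_ofReal_mul_I_im]
  · simp [ht]

theorem image_sin_Ioo_zero_pi_div_two : sin '' Ioo 0 (π / 2) = Ioo 0 1 := by
  ext t
  constructor
  · rintro ⟨θ, ⟨hθ₀, hθ₁⟩, rfl⟩
    refine ⟨sin_pos_of_pos_of_lt_pi hθ₀ (by linarith [pi_pos]), ?_⟩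
    simpa using
      strictMonoOn_sin ⟨by linarith, hθ₁.le⟩ ⟨by linarith [pi_pos], le_rfl⟩ hθ₁
  · rintro ⟨ht₀, ht₁⟩
    exact ⟨arcsin t, ⟨arcsin_pos.2 ht₀, arcsin_lt_pi_div_two.2 ht₁⟩,
      sin_arcsin (by linarith) ht₁.le⟩

theorem abs_cos_mul_div_sqrt_one_sub_sin_sq {θ : ℝ} (hθ : θ ∈ Ioo (-(π / 2)) (π / 2))
    (a : ℝ) :
    |cos θ| * (a / √(1 - sin θ ^ 2)) = a := by
  have hcos := cos_pos_of_mem_Ioo hθ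
  rw [← cos_eq_sqrt_one_sub_sin_sq hθ.1.le hθ.2.le, abs_of_pos hcos]
  field_simp

theorem injOn_sin_Ioo_zero_pi_div_two : InjOn sin (Ioo 0 (π / 2)) :=
  injOn_sin.mono fun _ hθ => mem_Icc.2 ⟨by linarith [hθ.1, pi_pos], hθ.2.le⟩

theorem integral_Ioo_div_sqrt_one_sub_sq_eq (h : ℝ → ℝ) :
    ∫ t in Ioo 0 1, h t / √(1 - t ^ 2) = ∫ θ in Ioo 0 (π / 2), h (sin θ) := by
  rw [← image_sin_Ioo_zero_pi_div_two, integral_image_eq_integral_abs_deriv_smul measurableSet_Ioo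
    (fun θ _ => (hasDerivAt_sin θ).hasDerivWithinAt) injOn_sin_Ioo_zero_pi_div_two]
  refine setIntegral_congr_fun measurableSet_Ioo fun θ hθ => ?_
  exact abs_cos_mul_div_sqrt_one_sub_sin_sq ⟨by linarith [hθ.1, pi_pos], hθ.2⟩ _

theorem integrableOn_Ioo_div_sqrt_one_sub_sq {h : ℝ → ℝ} (hh : Continuous h) :
    IntegrableOn (fun t => h t / √(1 - t ^ 2)) (Ioo 0 1) := by
  rw [← image_sin_Ioo_zero_pi_div_two, integrableOn_image_iff_integrableOn_abs_deriv_smul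
    measurableSet_Ioo (fun θ _ => (hasDerivAt_sin θ).hasDerivWithinAt)
    injOn_sin_Ioo_zero_pi_div_two]
  refine ((hh.comp continuous_sin).integrableOn_Icc.mono_set Ioo_subset_Icc_self).congr_fun
    (fun θ hθ => ?_) measurableSet_Ioo
  exact (abs_cos_mul_div_sqrt_one_sub_sin_sq ⟨by linarith [hθ.1, pi_pos], hθ.2⟩ _).symm

theorem integral_comp_sin_eq_two_mul {h : ℝ → ℝ} (hh : Continuous h) :
    ∫ θ in (0:ℝ)..π, h (sin θ) = 2 * ∫ t in Ioo 0 1, h t / √(1 - t ^ 2) := by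
  have hint : ∀ a b : ℝ, IntervalIntegrable (fun θ => h (sin θ)) volume a b :=
    fun a b => (hh.comp continuous_sin).intervalIntegrable a b
  have hreflect : ∫ θ in (π / 2)..π, h (sin θ) = ∫ θ in (0:ℝ)..(π / 2), h (sin θ) := by
    simpa [sin_pi_sub, show π - π / 2 = π / 2 by ring] using
      (integral_comp_sub_left (fun θ => h (sin θ)) π (a := 0) (b := π / 2)).symm
  rw [integral_Ioo_div_sqrt_one_sub_sq_eq, ← integral_add_adjacent_intervals (hint 0 (π / 2))
    (hint (π / 2) π), hreflect, integral_of_le (by positivity), integral_Ioc_eq_integral_Ioo]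
  ring

theorem tendsto_besselJ0_atTop : Tendsto besselJ0 atTop (𝓝 0) := by
  have hJ (x : ℝ) :
      besselJ0 x = 2 / π * ∫ t in Ioo 0 1, cos (x * t) * (1 / √(1 - t ^ 2)) := by
    rw [besselJ0, integral_comp_sin_eq_two_mul (h := fun t => cos (x * t)) (by fun_prop),
      ← mul_assoc, one_div_mul_eq_div]
    simp only [mul_one_div]
  have h := ((tendsto_setIntegral_cos_mul_cocompact measurableSet_Ioo
    (integrableOn_Ioo_div_sqrt_one_sub_sq (h := fun _ => 1) continuous_const)).mono_left
      atTop_le_cocompact).const_mul (2 / π)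
  rw [mul_zero] at h
  exact h.congr fun x => (hJ x).symm

theorem tendsto_besselJ1_atTop : Tendsto besselJ1 atTop (𝓝 0) := by
  have hJ (x : ℝ) :
      besselJ1 x = 2 / π * ∫ t in Ioo 0 1, sin (x * t) * (t / √(1 - t ^ 2)) := by
    rw [besselJ1_eq_integral_sin_mul_sin,
      integral_comp_sin_eq_two_mul (h := fun t => t * sin (x * t)) (by fun_prop),
      ← mul_assoc, one_div_mul_eq_div]
    congr 1
    exact setIntegral_congr_fun measurableSet_Ioo fun t _ => by ring
  have h := ((tendsto_setIntegral_sin_mul_cocompact measurableSet_Ioo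
    (integrableOn_Ioo_div_sqrt_one_sub_sq continuous_id)).mono_left atTop_le_cocompact).const_mul
    (2 / π)
  rw [mul_zero] at h
  exact h.congr fun x => (hJ x).symm

theorem hasDerivAt_besselJ0_sq_add_besselJ1_sq {x : ℝ} (hx : x ≠ 0) :
    HasDerivAt (fun x => besselJ0 x ^ 2 + besselJ1 x ^ 2) (-(2 * besselJ1 x ^ 2 / x)) x := by
  refine (((hasDerivAt_besselJ0 x).fun_pow 2).fun_add
    ((hasDerivAt_besselJ1 hx).fun_pow 2)).congr_deriv ?_
  simp only [Nat.cast_ofNat, Nat.add_one_sub_one, pow_one]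
  field_simp
  ring

theorem integral_besselJ1_sq_div : ∫ x in Ioi 0, besselJ1 x ^ 2 / x = 1 / 2 := by
  have hcont : Continuous fun x => -(besselJ0 x ^ 2 + besselJ1 x ^ 2) / 2 := by
    have := continuous_besselJ0; have := continuous_besselJ1; fun_prop
  have hlim : Tendsto (fun x => -(besselJ0 x ^ 2 + besselJ1 x ^ 2) / 2) atTop (𝓝 0) := by
    simpa using
      (((tendsto_besselJ0_atTop.pow 2).add (tendsto_besselJ1_atTop.pow 2)).neg).div_const 2
  rw [integral_Ioi_of_hasDerivAt_of_nonneg hcont.continuousWithinAt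
    (fun x hx => ((hasDerivAt_besselJ0_sq_add_besselJ1_sq (ne_of_gt hx)).neg.div_const
      2).congr_deriv (by ring))
    (fun x hx => div_nonneg (sq_nonneg _) (le_of_lt hx)) hlim, besselJ0_zero, besselJ1_zero]
  norm_num

theorem integral_besselJ1_mul_sq_div {α : ℝ} (hα : 0 < α) :
    ∫ r in Ioi 0, besselJ1 (α * r) ^ 2 / r = 1 / 2 := by
  have h := integral_comp_mul_left_Ioi (fun x => besselJ1 x ^ 2 / x) 0 hα
  rw [mul_zero, integral_besselJ1_sq_div, smul_eq_mul] at h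
  calc ∫ r in Ioi 0, besselJ1 (α * r) ^ 2 / r
      = α * ∫ r in Ioi 0, besselJ1 (α * r) ^ 2 / (α * r) := by
        rw [← MeasureTheory.integral_const_mul]
        refine setIntegral_congr_fun measurableSet_Ioi fun r hr => ?_
        field_simp
    _ = 1 / 2 := by rw [h]; field_simp

theorem integral_eq_two_pi_mul_of_radial {f : ℝ × ℝ → ℝ} {g : ℝ → ℝ}
    (hfg : ∀ p ≠ 0, f p = g √(p.1 ^ 2 + p.2 ^ 2)) :
    ∫ p, f p = 2 * π * ∫ r in Ioi 0, r * g r := by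
  have hpolar : ∀ p ∈ Ioi (0:ℝ) ×ˢ Ioo (-π) π,
      p.1 • f (polarCoord.symm p) = (p.1 * g p.1) * 1 := by
    rintro ⟨r, θ⟩ ⟨hr, -⟩
    have hsq : (r * cos θ) ^ 2 + (r * sin θ) ^ 2 = r ^ 2 := by
      rw [mul_pow, mul_pow, ← mul_add, cos_sq_add_sin_sq, mul_one]
    have hne : (r * cos θ, r * sin θ) ≠ 0 := fun h0 => by
      simp only [Prod.mk_eq_zero] at h0
      rw [h0.1, h0.2] at hsq
      nlinarith [mem_Ioi.1 hr]
    rw [polarCoord_symm_apply, hfg _ hne, hsq, sqrt_sq (le_of_lt hr), smul_eq_mul, mul_one]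
  rw [← integral_comp_polarCoord_symm, polarCoord_target,
    setIntegral_congr_fun (measurableSet_Ioi.prod measurableSet_Ioo) hpolar,
    Measure.volume_eq_prod, setIntegral_prod_mul (fun r => r * g r) (fun _ => (1:ℝ))]
  rw [MeasureTheory.setIntegral_const, Real.volume_real_Ioo_of_le (by linarith [pi_pos]),
    smul_eq_mul]
  ring

theorem airyProfile_nonneg (α : ℝ) (p : ℝ × ℝ) : 0 ≤ airyProfile α p := by
  unfold airyProfile
  split_ifs <;> positivity

theorem airyProfile_of_ne_zero (α : ℝ) {p : ℝ × ℝ} (hp : p ≠ 0) :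
    airyProfile α p =
      besselJ1 (α * √(p.1 ^ 2 + p.2 ^ 2)) ^ 2 / (π * √(p.1 ^ 2 + p.2 ^ 2) ^ 2) := by
  rw [airyProfile, if_neg hp, sq_sqrt (by positivity)]

/-- The Airy profile `q(x,y) = J₁²(α√(x²+y²))/(π(x²+y²))`, `α > 0`, is a probability
density on ℝ²: it is nonnegative and integrates to one. -/
theorem airyProfile_isProbabilityDensity (α : ℝ) (hα : 0 < α) :
    (∀ p : ℝ × ℝ, 0 ≤ airyProfile α p) ∧ (∫ p : ℝ × ℝ, airyProfile α p) = 1 := by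
  refine ⟨airyProfile_nonneg α, ?_⟩
  have hradial : ∫ r in Ioi 0, r * (besselJ1 (α * r) ^ 2 / (π * r ^ 2)) =
      1 / π * ∫ r in Ioi 0, besselJ1 (α * r) ^ 2 / r := by
    rw [← MeasureTheory.integral_const_mul]
    refine setIntegral_congr_fun measurableSet_Ioi fun r hr => ?_
    field_simp [(mem_Ioi.1 hr).ne']
  rw [integral_eq_two_pi_mul_of_radial (g := fun r => besselJ1 (α * r) ^ 2 / (π * r ^ 2))
    (fun p hp => airyProfile_of_ne_zero α hp), hradial, integral_besselJ1_mul_sq_div hα]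
  field_simp
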